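/- arXiv:1706.08219 — 2 statements merged into one kernel-verified Lean document; each statement's English description precedes it below -/
import Mathlib

section
/- Suppose m items are each assigned independently and uniformly at random to one of g groups, there are n players partitioned into the groups, utilities u_i(j) ∈ [0,1] are independent with E[u_i(j)] ≥ μ_min > 0, and utilities are additive. For α ∈ [0,1) set δ = (1-α)/(1+α). Then the probability that the random assignment is not α-approximate envy-free is at most 2ng·exp(-δ²·m·μ_min/(3g)). -/
/-!
For a player `i` and a group `q`, the value `u_i(M_q) = ∑_j u_i(j) · 1[σ_j = q]` is a sum of
independent `[0,1]`-valued variables whose mean `M_i = (∑_j E u_i(j)) / g ≥ m μ_min / g` does not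
depend on `q`. If every `u_i(M_q)` lies strictly between `(1 - δ) M_i` and `(1 + δ) M_i`, then
`α u_i(M_p) ≤ α (1 + δ) M_i = (1 - δ) M_i ≤ u_i(M_{g(i)})`, because `α (1 + δ) = 1 - δ`.
By the multiplicative Chernoff bounds, each of these `2 n g` inequalities fails with probability
at most `exp (-δ² M_i / 3) ≤ exp (-δ² m μ_min / (3 g))`.
-/

open MeasureTheory ProbabilityTheory Real Set Finset
open scoped ENNReal

lemma sq_div_three_le_one_add_mul_log_one_add_sub {x : ℝ} (h0 : 0 ≤ x) (h1 : x ≤ 1) :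
    x ^ 2 / 3 ≤ (1 + x) * log (1 + x) - x := by
  have hlog := le_log_one_add_of_nonneg h0
  have hpade : x ^ 2 / 3 ≤ (1 + x) * (2 * x / (x + 2)) - x := by
    rw [mul_div_assoc', div_sub' (by positivity), div_le_div_iff₀ (by norm_num) (by positivity)]
    nlinarith [sq_nonneg x]
  nlinarith

lemma sq_div_two_le_one_sub_mul_log_one_sub_add {x : ℝ} (h0 : 0 ≤ x) (h1 : x < 1) :
    x ^ 2 / 2 ≤ (1 - x) * log (1 - x) + x := by
  let F : ℝ → ℝ := fun y => (1 - y) * log (1 - y) + y - y ^ 2 / 2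
  have hF : ∀ y < 1, HasDerivAt F (-log (1 - y) - y) y := fun y hy => by
    have h1y : HasDerivAt (fun y : ℝ => 1 - y) (-1) y := by
      simpa using (hasDerivAt_id y).const_sub 1
    refine (((h1y.mul (h1y.log (by linarith))).add (hasDerivAt_id' y)).sub
      ((hasDerivAt_pow 2 y).div_const 2)).congr_deriv ?_
    have : 1 - y ≠ 0 := by linarith
    field_simp
    ring
  have hmono : MonotoneOn F (Icc 0 x) :=
    monotoneOn_of_hasDerivWithinAt_nonneg (convex_Icc 0 x)
      (fun y hy => (hF y (by linarith [hy.2])).continuousAt.continuousWithinAt)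
      (fun y hy => (hF y (by linarith [(interior_subset hy : y ∈ Icc 0 x).2])).hasDerivWithinAt)
      (fun y hy => by
        have hy' : y ∈ Icc 0 x := interior_subset hy
        linarith [log_le_sub_one_of_pos (show 0 < 1 - y by linarith [hy'.2])])
  have := hmono ⟨le_rfl, h0⟩ ⟨h0, le_rfl⟩ h0
  simp only [F, sub_zero, log_one, mul_zero, add_zero, ne_eq, OfNat.ofNat_ne_zero,
    not_false_eq_true, zero_pow, zero_div] at this
  linarith

lemma exp_mul_le_one_add_mul_exp_sub_one (t : ℝ) {x : ℝ} (hx : x ∈ Icc (0 : ℝ) 1) :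
    exp (t * x) ≤ 1 + (exp t - 1) * x := by
  have h := convexOn_exp.2 (mem_univ 0) (mem_univ t) (sub_nonneg.2 hx.2) hx.1 (by ring)
  simp only [smul_eq_mul, mul_zero, zero_add, exp_zero, mul_one, mul_comm x t] at h
  linarith

namespace ProbabilityTheory

section Chernoff

variable {Ω ι : Type*} {mΩ : MeasurableSpace Ω} {μ : Measure Ω} [IsProbabilityMeasure μ]

lemma mgf_le_exp_of_mem_Icc {X : Ω → ℝ} (hX : Measurable X) (h01 : ∀ ω, X ω ∈ Icc (0 : ℝ) 1)
    (t : ℝ) : mgf X μ t ≤ exp ((exp t - 1) * μ[X]) := by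
  have hXint : Integrable X μ := .of_mem_Icc 0 1 hX.aemeasurable (ae_of_all _ h01)
  calc mgf X μ t ≤ μ[fun ω => 1 + (exp t - 1) * X ω] :=
        integral_mono (integrable_exp_mul_of_mem_Icc hX.aemeasurable (ae_of_all _ h01))
          ((integrable_const 1).add (hXint.const_mul _))
          fun ω => exp_mul_le_one_add_mul_exp_sub_one t (h01 ω)
    _ = 1 + (exp t - 1) * μ[X] := by
        rw [integral_add (integrable_const 1) (hXint.const_mul _), integral_const,
          integral_const_mul]
        simp
    _ ≤ exp ((exp t - 1) * μ[X]) := by linarith [add_one_le_exp ((exp t - 1) * μ[X])]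

variable {X : ι → Ω → ℝ}

/- `hindep` follows from `iIndepFun X μ`; it is the form in which independence reaches the sums
`∑_j u_i(j) · 1[σ_j = q]` below, through `indep_iSup_of_disjoint`. -/
lemma mgf_sum_eq_prod_of_indepFun_sum (hX : ∀ i, Measurable (X i))
    (hindep : ∀ (s : Finset ι) (i : ι), i ∉ s → IndepFun (X i) (∑ j ∈ s, X j) μ)
    (s : Finset ι) (t : ℝ) : mgf (∑ i ∈ s, X i) μ t = ∏ i ∈ s, mgf (X i) μ t := by
  induction s using Finset.cons_induction with
  | empty => simp
  | cons i s hi ih =>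
    rw [sum_cons, prod_cons, (hindep s i hi).mgf_add' (hX i).aestronglyMeasurable
      (by fun_prop : Measurable (∑ j ∈ s, X j)).aestronglyMeasurable, ih]

lemma mgf_sum_le_exp_of_mem_Icc (hX : ∀ i, Measurable (X i))
    (h01 : ∀ i ω, X i ω ∈ Icc (0 : ℝ) 1)
    (hindep : ∀ (s : Finset ι) (i : ι), i ∉ s → IndepFun (X i) (∑ j ∈ s, X j) μ)
    (s : Finset ι) (t : ℝ) :
    mgf (∑ i ∈ s, X i) μ t ≤ exp ((exp t - 1) * ∑ i ∈ s, μ[X i]) := by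
  rw [mgf_sum_eq_prod_of_indepFun_sum hX hindep, mul_sum, exp_sum]
  exact prod_le_prod (fun i _ => mgf_nonneg) fun i _ => mgf_le_exp_of_mem_Icc (hX i) (h01 i) t

lemma integrable_exp_mul_sum_of_mem_Icc (hX : ∀ i, Measurable (X i))
    (h01 : ∀ i ω, X i ω ∈ Icc (0 : ℝ) 1) (s : Finset ι) (t : ℝ) :
    Integrable (fun ω => exp (t * (∑ i ∈ s, X i) ω)) μ := by
  refine integrable_exp_mul_of_mem_Icc (a := 0) (b := #s)
    (by fun_prop : Measurable (∑ i ∈ s, X i)).aemeasurable (ae_of_all _ fun ω => ?_)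
  rw [Finset.sum_apply]
  exact ⟨sum_nonneg fun i _ => (h01 i ω).1,
    (sum_le_sum fun i _ => (h01 i ω).2).trans_eq (by simp)⟩

lemma measureReal_sum_ge_le_exp (hX : ∀ i, Measurable (X i))
    (h01 : ∀ i ω, X i ω ∈ Icc (0 : ℝ) 1)
    (hindep : ∀ (s : Finset ι) (i : ι), i ∉ s → IndepFun (X i) (∑ j ∈ s, X j) μ)
    (s : Finset ι) {δ : ℝ} (hδ0 : 0 ≤ δ) (hδ1 : δ ≤ 1) :
    μ.real {ω | (1 + δ) * ∑ i ∈ s, μ[X i] ≤ ∑ i ∈ s, X i ω}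
      ≤ exp (-(δ ^ 2 * ∑ i ∈ s, μ[X i]) / 3) := by
  set M := ∑ i ∈ s, μ[X i]
  have hM : 0 ≤ M := sum_nonneg fun i _ => integral_nonneg fun ω => (h01 i ω).1
  have hmgf := mgf_sum_le_exp_of_mem_Icc hX h01 hindep s (log (1 + δ))
  rw [exp_log (by linarith)] at hmgf
  have hchernoff := measure_ge_le_exp_mul_mgf ((1 + δ) * M) (log_nonneg (by linarith))
    (integrable_exp_mul_sum_of_mem_Icc (μ := μ) hX h01 s (log (1 + δ)))
  simp only [Finset.sum_apply] at hchernoff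
  calc _ ≤ exp (-log (1 + δ) * ((1 + δ) * M)) * mgf (∑ i ∈ s, X i) μ (log (1 + δ)) := hchernoff
    _ ≤ exp (-log (1 + δ) * ((1 + δ) * M)) * exp ((1 + δ - 1) * M) := by gcongr
    _ = exp (-(((1 + δ) * log (1 + δ) - δ) * M)) := by rw [← exp_add]; ring_nf
    _ ≤ exp (-(δ ^ 2 * M) / 3) := exp_le_exp.2 <| by
      nlinarith [sq_div_three_le_one_add_mul_log_one_add_sub hδ0 hδ1]

lemma measureReal_sum_le_le_exp (hX : ∀ i, Measurable (X i))
    (h01 : ∀ i ω, X i ω ∈ Icc (0 : ℝ) 1)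
    (hindep : ∀ (s : Finset ι) (i : ι), i ∉ s → IndepFun (X i) (∑ j ∈ s, X j) μ)
    (s : Finset ι) {δ : ℝ} (hδ0 : 0 ≤ δ) (hδ1 : δ < 1) :
    μ.real {ω | ∑ i ∈ s, X i ω ≤ (1 - δ) * ∑ i ∈ s, μ[X i]}
      ≤ exp (-(δ ^ 2 * ∑ i ∈ s, μ[X i]) / 2) := by
  set M := ∑ i ∈ s, μ[X i]
  have hM : 0 ≤ M := sum_nonneg fun i _ => integral_nonneg fun ω => (h01 i ω).1
  have hmgf := mgf_sum_le_exp_of_mem_Icc hX h01 hindep s (log (1 - δ))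
  rw [exp_log (by linarith)] at hmgf
  have hchernoff := measure_le_le_exp_mul_mgf ((1 - δ) * M)
    (log_nonpos (by linarith) (by linarith))
    (integrable_exp_mul_sum_of_mem_Icc (μ := μ) hX h01 s (log (1 - δ)))
  simp only [Finset.sum_apply] at hchernoff
  calc _ ≤ exp (-log (1 - δ) * ((1 - δ) * M)) * mgf (∑ i ∈ s, X i) μ (log (1 - δ)) := hchernoff
    _ ≤ exp (-log (1 - δ) * ((1 - δ) * M)) * exp ((1 - δ - 1) * M) := by gcongr
    _ = exp (-(((1 - δ) * log (1 - δ) + δ) * M)) := by rw [← exp_add]; ring_nf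
    _ ≤ exp (-(δ ^ 2 * M) / 2) := exp_le_exp.2 <| by
      nlinarith [sq_div_two_le_one_sub_mul_log_one_sub_add hδ0 hδ1]

end Chernoff

variable {Ω : Type*} {mΩ : MeasurableSpace Ω} {μ : Measure Ω}

lemma iIndepFun.indepFun_of_measurable_iSup {κ : Type*} {β : κ → Type*}
    {mβ : ∀ k, MeasurableSpace (β k)} {f : ∀ k, Ω → β k} (h : iIndepFun f μ)
    (hf : ∀ k, Measurable (f k)) {S T : Set κ} (hST : Disjoint S T)
    {γ γ' : Type*} [MeasurableSpace γ] [MeasurableSpace γ'] {Y : Ω → γ} {Z : Ω → γ'}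
    (hY : Measurable[⨆ k ∈ S, (mβ k).comap (f k)] Y)
    (hZ : Measurable[⨆ k ∈ T, (mβ k).comap (f k)] Z) :
    IndepFun Y Z μ :=
  (IndepFun_iff_Indep Y Z μ).2 <| indep_of_indep_of_le
    (indep_iSup_of_disjoint (fun k => (hf k).comap_le) ((iIndepFun_iff_iIndep _ _ μ).1 h) hST)
    hY.comap_le hZ.comap_le

lemma IndepFun.integral_indicator_preimage_eq_mul {β : Type*} [MeasurableSpace β]
    {U : Ω → ℝ} {V : Ω → β} (h : IndepFun U V μ) (hU : Measurable U) (hV : Measurable V)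
    {B : Set β} (hB : MeasurableSet B) :
    ∫ ω, (V ⁻¹' B).indicator U ω ∂μ = μ.real (V ⁻¹' B) * ∫ ω, U ω ∂μ := by
  rw [integral_indicator (hV hB)]
  exact Indep.setIntegral_eq_mul (f := id) hV.comap_le ((IndepFun_iff_Indep V U μ).1 h.symm)
    hU.aemeasurable ⟨B, hB, rfl⟩ aestronglyMeasurable_id

end ProbabilityTheory

section RandomAssignment

variable {Ω P I : Type*} {G : Type}

lemma sum_filter_eq_sum_indicator_preimage [Fintype I] [DecidableEq G] (u : I → Ω → ℝ)
    (σ : I → Ω → G) (q : G) (ω : Ω) :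
    ∑ j ∈ univ.filter (fun j => σ j ω = q), u j ω = ∑ j, (σ j ⁻¹' {q}).indicator (u j) ω := by
  rw [sum_filter]
  exact sum_congr rfl fun j _ => by by_cases h : σ j ω = q <;> simp [h]

lemma setOf_not_forall_mul_le_subset_iUnion (V : P → G → Ω → ℝ) (M : P → ℝ) (grp : P → G)
    {α δ : ℝ} (hα : 0 ≤ α) (hαδ : α * (1 + δ) = 1 - δ) :
    {ω | ¬ ∀ i p, α * V i p ω ≤ V i (grp i) ω} ⊆
      ⋃ c : P × G, ({ω | V c.1 c.2 ω ≤ (1 - δ) * M c.1} ∪ {ω | (1 + δ) * M c.1 ≤ V c.1 c.2 ω}) := by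
  intro ω hω
  simp only [mem_iUnion, mem_union, mem_ofPred_eq, Prod.exists] at hω ⊢
  by_contra! h
  refine hω fun i p => ?_
  calc α * V i p ω ≤ α * ((1 + δ) * M i) := mul_le_mul_of_nonneg_left (h i p).2.le hα
    _ = (1 - δ) * M i := by rw [← mul_assoc, hαδ]
    _ ≤ V i (grp i) ω := (h i (grp i)).1.le

variable [MeasureSpace Ω] [MeasurableSpace G] [MeasurableSingletonClass G]

lemma sum_integral_indicator_preimage_eq_div [Fintype I] {u : I → Ω → ℝ} {σ : I → Ω → G}
    (humeas : ∀ j, Measurable (u j)) (hσmeas : ∀ j, Measurable (σ j))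
    (hindep : ∀ j, IndepFun (u j) (σ j) ℙ) {q : G} {g : ℕ}
    (hunif : ∀ j, (ℙ : Measure Ω) (σ j ⁻¹' {q}) = (g : ℝ≥0∞)⁻¹) :
    ∑ j, ∫ ω, (σ j ⁻¹' {q}).indicator (u j) ω = (∑ j, ∫ ω, u j ω) / g := by
  rw [sum_div]
  refine sum_congr rfl fun j _ => ?_
  rw [(hindep j).integral_indicator_preimage_eq_mul (humeas j) (hσmeas j)
    (measurableSet_singleton q), measureReal_def, hunif j]
  simp [div_eq_inv_mul]

lemma indepFun_indicator_preimage_sum {u : P → I → Ω → ℝ} {σ : I → Ω → G}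
    (humeas : ∀ i j, Measurable (u i j)) (hσmeas : ∀ j, Measurable (σ j))
    (hindep : iIndepFun
      (m := fun x : (P × I) ⊕ I =>
        Sum.rec (motive := fun x => MeasurableSpace (Sum.elim (fun _ => ℝ) (fun _ => G) x))
          (fun _ => Real.measurableSpace) (fun _ => inferInstanceAs (MeasurableSpace G)) x)
      (fun x => Sum.rec (motive := fun x => Ω → Sum.elim (fun _ => ℝ) (fun _ => G) x)
        (fun p => u p.1 p.2) (fun j => σ j) x))
    (i : P) (q : G) (s : Finset I) (j : I) (hj : j ∉ s) :
    IndepFun ((σ j ⁻¹' {q}).indicator (u i j))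
      (∑ k ∈ s, (σ k ⁻¹' {q}).indicator (u i k)) ℙ := by
  have hdisj : Disjoint (Sum.elim (fun p : P × I => p.2 = j) (· = j) : Set ((P × I) ⊕ I))
      (Sum.elim (fun p : P × I => p.2 ∈ s) (· ∈ s)) := by
    refine Set.disjoint_left.2 fun x hx hx' => ?_
    rcases x with ⟨_, k⟩ | k <;> exact hj (hx ▸ hx')
  refine hindep.indepFun_of_measurable_iSup
    (by rintro (⟨i, j⟩ | j); exacts [humeas i j, hσmeas j]) hdisj ?_ ?_
  · refine Measurable.indicator (measurable_iff_comap_le.2 ?_)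
      (measurable_iff_comap_le.2 ?_ (measurableSet_singleton q))
    · exact le_iSup₂_of_le (Sum.inl (i, j)) rfl le_rfl
    · exact le_iSup₂_of_le (Sum.inr j) rfl le_rfl
  · rw [sum_fn]
    refine Finset.measurable_sum s fun k hk => Measurable.indicator (measurable_iff_comap_le.2 ?_)
      (measurable_iff_comap_le.2 ?_ (measurableSet_singleton q))
    · exact le_iSup₂_of_le (Sum.inl (i, k)) hk le_rfl
    · exact le_iSup₂_of_le (Sum.inr k) hk le_rfl

lemma measureReal_sum_indicator_tails_le [Fintype I] [IsProbabilityMeasure (ℙ : Measure Ω)]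
    {u : P → I → Ω → ℝ} {σ : I → Ω → G}
    (humeas : ∀ i j, Measurable (u i j)) (hσmeas : ∀ j, Measurable (σ j))
    (h01 : ∀ i j ω, u i j ω ∈ Icc (0 : ℝ) 1)
    (hindep : iIndepFun
      (m := fun x : (P × I) ⊕ I =>
        Sum.rec (motive := fun x => MeasurableSpace (Sum.elim (fun _ => ℝ) (fun _ => G) x))
          (fun _ => Real.measurableSpace) (fun _ => inferInstanceAs (MeasurableSpace G)) x)
      (fun x => Sum.rec (motive := fun x => Ω → Sum.elim (fun _ => ℝ) (fun _ => G) x)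
        (fun p => u p.1 p.2) (fun j => σ j) x))
    (i : P) (q : G) {δ : ℝ} (hδ0 : 0 ≤ δ) (hδ1 : δ < 1) {M L : ℝ}
    (hM : ∑ j, ∫ ω, (σ j ⁻¹' {q}).indicator (u i j) ω = M) (hLM : L ≤ M) :
    (ℙ : Measure Ω).real ({ω | ∑ j, (σ j ⁻¹' {q}).indicator (u i j) ω ≤ (1 - δ) * M} ∪
        {ω | (1 + δ) * M ≤ ∑ j, (σ j ⁻¹' {q}).indicator (u i j) ω})
      ≤ 2 * exp (-(δ ^ 2 * L) / 3) := by
  have hX : ∀ j, Measurable ((σ j ⁻¹' {q}).indicator (u i j)) := fun j =>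
    (humeas i j).indicator (hσmeas j (measurableSet_singleton q))
  have hX01 : ∀ j ω, (σ j ⁻¹' {q}).indicator (u i j) ω ∈ Icc (0 : ℝ) 1 := fun j ω => by
    by_cases h : ω ∈ σ j ⁻¹' {q} <;> simp [h, (h01 i j ω).1, (h01 i j ω).2]
  have hXindep := indepFun_indicator_preimage_sum humeas hσmeas hindep i q
  have hM0 : 0 ≤ M := hM ▸ sum_nonneg fun j _ => integral_nonneg fun ω => (hX01 j ω).1
  have hlow := measureReal_sum_le_le_exp hX hX01 hXindep univ hδ0 hδ1
  have hup := measureReal_sum_ge_le_exp hX hX01 hXindep univ hδ0 hδ1.le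
  rw [hM] at hlow hup
  have hδL : δ ^ 2 * L ≤ δ ^ 2 * M := mul_le_mul_of_nonneg_left hLM (sq_nonneg δ)
  have hexp_low : exp (-(δ ^ 2 * M) / 2) ≤ exp (-(δ ^ 2 * L) / 3) :=
    exp_le_exp.2 (by nlinarith [mul_nonneg (sq_nonneg δ) hM0])
  have hexp_up : exp (-(δ ^ 2 * M) / 3) ≤ exp (-(δ ^ 2 * L) / 3) := exp_le_exp.2 (by linarith)
  refine (measureReal_union_le _ _).trans ?_
  linarith

end RandomAssignment

theorem random_assignment_approx_envy_free_general
    {Ω : Type*} [MeasureSpace Ω] [IsProbabilityMeasure (ℙ : Measure Ω)]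
    {g m n : ℕ}
    {μmin : ℝ}
    (grp : Fin n → Fin g)
    (u : Fin n → Fin m → Ω → ℝ) (humeas : ∀ i j, Measurable (u i j))
    (h01 : ∀ i j ω, u i j ω ∈ Set.Icc (0 : ℝ) 1)
    (hmean : ∀ i j, μmin ≤ ∫ ω, u i j ω)
    (σ : Fin m → Ω → Fin g) (hσmeas : ∀ j, Measurable (σ j))
    (hunif : ∀ (j : Fin m) (q : Fin g), (ℙ : Measure Ω) {ω | σ j ω = q} = (g : ℝ≥0∞)⁻¹)
    (hindep : iIndepFun
      (m := fun x : (Fin n × Fin m) ⊕ Fin m =>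
        Sum.rec (motive := fun x => MeasurableSpace (Sum.elim (fun _ => ℝ) (fun _ => Fin g) x))
          (fun _ => Real.measurableSpace) (fun _ => inferInstanceAs (MeasurableSpace (Fin g))) x)
      (fun x => Sum.rec (motive := fun x => Ω → Sum.elim (fun _ => ℝ) (fun _ => Fin g) x)
        (fun p => u p.1 p.2) (fun j => σ j) x))
    {α δ : ℝ} (hα : α ∈ Set.Ico (0 : ℝ) 1) (hδ : δ = (1 - α) / (1 + α)) :
    ((ℙ : Measure Ω) {ω | ¬ ∀ (i : Fin n) (p : Fin g),
        α * ∑ j ∈ Finset.univ.filter (fun j => σ j ω = p), u i j ω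
          ≤ ∑ j ∈ Finset.univ.filter (fun j => σ j ω = grp i), u i j ω}).toReal
      ≤ 2 * n * g * Real.exp (-(δ ^ 2 * m * μmin) / (3 * g)) := by
  rw [← measureReal_def]
  simp only [sum_filter_eq_sum_indicator_preimage]
  rcases hα.1.eq_or_lt with rfl | hα0
  -- `α = 0` gives `δ = 1`, beyond the lower tail bound, but then nobody is envious.
  · have hnonneg : ∀ i p ω, 0 ≤ ∑ j, (σ j ⁻¹' {p}).indicator (u i j) ω := fun i p ω =>
      sum_nonneg fun j _ => indicator_nonneg (fun ω _ => (h01 i j ω).1) ω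
    simp only [zero_mul, hnonneg, implies_true, not_true_eq_false, ofPred_false, measureReal_empty]
    positivity
  have hδ0 : 0 < δ := hδ ▸ div_pos (by linarith [hα.2]) (by linarith)
  have hδ1 : δ < 1 := hδ ▸ (div_lt_one (by linarith)).2 (by linarith)
  have hαδ : α * (1 + δ) = 1 - δ := by rw [hδ]; field_simp; ring
  have hmeanX : ∀ i q, ∑ j, ∫ ω, (σ j ⁻¹' {q}).indicator (u i j) ω = (∑ j, ∫ ω, u i j ω) / g :=
    fun i q => sum_integral_indicator_preimage_eq_div (humeas i) hσmeas
      (fun j => hindep.indepFun (i := .inl (i, j)) (j := .inr j) Sum.inl_ne_inr) (hunif · q)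
  have hM : ∀ i, m * μmin / g ≤ (∑ j, ∫ ω, u i j ω) / g := fun i => by
    gcongr
    simpa using sum_le_sum fun j (_ : j ∈ Finset.univ) => hmean i j
  rw [show -(δ ^ 2 * m * μmin) / (3 * g) = -(δ ^ 2 * (m * μmin / g)) / 3 by ring]
  refine ((measureReal_mono (setOf_not_forall_mul_le_subset_iUnion _
    (fun i => (∑ j, ∫ ω, u i j ω) / g) grp hα.1 hαδ)).trans
    (measureReal_iUnion_fintype_le _)).trans ?_
  calc _ ≤ ∑ _c : Fin n × Fin g, 2 * exp (-(δ ^ 2 * (m * μmin / g)) / 3) :=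
        sum_le_sum fun c _ => measureReal_sum_indicator_tails_le humeas hσmeas h01 hindep
          c.1 c.2 hδ0.le hδ1 (hmeanX c.1 c.2) (hM c.1)
    _ = 2 * n * g * exp (-(δ ^ 2 * (m * μmin / g)) / 3) := by
        simp only [sum_const, card_univ, Fintype.card_prod, Fintype.card_fin, nsmul_eq_mul,
          Nat.cast_mul]
        ring

theorem random_assignment_approx_envy_free
    {Ω : Type*} [MeasureSpace Ω] [IsProbabilityMeasure (ℙ : Measure Ω)]
    {g m n : ℕ} (hg : 2 ≤ g) (hm : 1 ≤ m) (hn : 1 ≤ n)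
    {μmin : ℝ} (hμmin : 0 < μmin)
    (grp : Fin n → Fin g)
    (u : Fin n → Fin m → Ω → ℝ) (humeas : ∀ i j, Measurable (u i j))
    (h01 : ∀ i j ω, u i j ω ∈ Set.Icc (0 : ℝ) 1)
    (hmean : ∀ i j, μmin ≤ ∫ ω, u i j ω)
    (σ : Fin m → Ω → Fin g) (hσmeas : ∀ j, Measurable (σ j))
    (hunif : ∀ (j : Fin m) (q : Fin g), (ℙ : Measure Ω) {ω | σ j ω = q} = (g : ℝ≥0∞)⁻¹)
    (hindep : iIndepFun
      (m := fun x : (Fin n × Fin m) ⊕ Fin m =>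
        Sum.rec (motive := fun x => MeasurableSpace (Sum.elim (fun _ => ℝ) (fun _ => Fin g) x))
          (fun _ => Real.measurableSpace) (fun _ => inferInstanceAs (MeasurableSpace (Fin g))) x)
      (fun x => Sum.rec (motive := fun x => Ω → Sum.elim (fun _ => ℝ) (fun _ => Fin g) x)
        (fun p => u p.1 p.2) (fun j => σ j) x))
    {α δ : ℝ} (hα : α ∈ Set.Ico (0 : ℝ) 1) (hδ : δ = (1 - α) / (1 + α)) :
    ((ℙ : Measure Ω) {ω | ¬ ∀ (i : Fin n) (p : Fin g),
        α * ∑ j ∈ Finset.univ.filter (fun j => σ j ω = p), u i j ω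
          ≤ ∑ j ∈ Finset.univ.filter (fun j => σ j ω = grp i), u i j ω}).toReal
      ≤ 2 * n * g * Real.exp (-(δ ^ 2 * m * μmin) / (3 * g)) :=
  random_assignment_approx_envy_free_general grp u humeas h01 hmean σ hσmeas hunif hindep hα hδ
end

section
/- Let X₁, ..., X_g be i.i.d. random variables each distributed as the sum of n' i.i.d. [0,1]-valued variables with mean μ, variance σ² ≥ σ_min² > 0, and third central moment at most 1. Then for sufficiently large n' (depending only on σ_min), E[max{X₁,...,X_g}] ≥ μn' + σ_min·√(n')/50. -/
/-!
For two distinct rows `k₀ ≠ k₁`, the maximum is at least `(X₀ + X₁ + |X₀ - X₁|) / 2`, so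
`E[max] ≥ μn' + E|Y| / 2` with `Y = X₀ - X₁`. Up to signs, `Y` is a sum of `2n'` independent
centred variables bounded by `1` with variance `v`; hence `E Y² = 2vn'` and
`E Y⁴ ≤ 3 (E Y²)² + E Y² ≤ 4 (E Y²)²` as soon as `2vn' ≥ 1`. Averaging the pointwise bound
`y² ≤ t|y| + y⁴/t²` with `t` of order `√(E Y²)` turns this into
`E|Y| ≥ (3/16) √(E Y²) ≥ (3/16) σmin √n'`, without any normal approximation.
-/

open MeasureTheory ProbabilityTheory

section Moments

variable {Ω : Type*} [MeasurableSpace Ω] {μ : Measure Ω}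

lemma sq_le_mul_abs_add_pow_four_div_sq {t : ℝ} (ht : 0 < t) (y : ℝ) :
    y ^ 2 ≤ t * |y| + y ^ 4 / t ^ 2 := by
  rcases le_total |y| t with hy | hy
  · have : 0 ≤ y ^ 4 / t ^ 2 := by positivity
    nlinarith [abs_nonneg y, sq_abs y]
  · have htt : t ^ 2 ≤ y ^ 2 := by nlinarith [sq_abs y]
    have : y ^ 2 ≤ y ^ 4 / t ^ 2 := by
      rw [le_div_iff₀ (by positivity)]
      nlinarith [sq_nonneg y]
    nlinarith [abs_nonneg y]

lemma sqrt_integral_sq_le_of_integral_pow_four_le {Y : Ω → ℝ} (hY : Integrable Y μ)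
    (hY2 : Integrable (fun ω ↦ Y ω ^ 2) μ) (hY4 : Integrable (fun ω ↦ Y ω ^ 4) μ) {K : ℝ}
    (hK : 0 < K) (h4 : ∫ ω, Y ω ^ 4 ∂μ ≤ K * (∫ ω, Y ω ^ 2 ∂μ) ^ 2) :
    √(∫ ω, Y ω ^ 2 ∂μ) ≤ 8 / 3 * √K * ∫ ω, |Y ω| ∂μ := by
  set E2 := ∫ ω, Y ω ^ 2 ∂μ
  set E1 := ∫ ω, |Y ω| ∂μ
  have hE1 : 0 ≤ E1 := integral_nonneg fun ω ↦ abs_nonneg _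
  have hE2 : 0 ≤ E2 := integral_nonneg fun ω ↦ sq_nonneg (Y ω)
  rcases hE2.eq_or_lt with hE2 | hE2
  · rw [← hE2, Real.sqrt_zero]
    positivity
  -- this choice of `t` makes the fourth-moment term at most `E2 / 4`
  set t := 2 * √K * √E2
  have ht : 0 < t := by positivity
  have key : E2 ≤ t * E1 + E2 / 4 := by
    calc E2 ≤ ∫ ω, (t * |Y ω| + Y ω ^ 4 / t ^ 2) ∂μ :=
          integral_mono hY2 ((hY.abs.const_mul t).add (hY4.div_const _))
            (sq_le_mul_abs_add_pow_four_div_sq ht <| Y ·)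
      _ = t * E1 + (∫ ω, Y ω ^ 4 ∂μ) / t ^ 2 := by
          rw [integral_add (hY.abs.const_mul t) (hY4.div_const _), integral_const_mul,
            integral_div]
      _ ≤ t * E1 + K * E2 ^ 2 / t ^ 2 := by gcongr
      _ = t * E1 + E2 / 4 := by
          rw [mul_pow, mul_pow, Real.sq_sqrt hK.le, Real.sq_sqrt hE2.le]
          field_simp
          ring
  have hsq : √E2 * √E2 = E2 := Real.mul_self_sqrt hE2.le
  have : 0 < √E2 := Real.sqrt_pos.mpr hE2
  nlinarith [Real.sqrt_nonneg K]

lemma integrable_of_abs_le [IsFiniteMeasure μ] {f : Ω → ℝ} {c : ℝ} (hf : Measurable f)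
    (hc : ∀ ω, |f ω| ≤ c) : Integrable f μ :=
  .of_bound hf.aestronglyMeasurable c (ae_of_all _ hc)

lemma integrable_pow_of_abs_le [IsFiniteMeasure μ] {f : Ω → ℝ} {c : ℝ} (hf : Measurable f)
    (hc : ∀ ω, |f ω| ≤ c) (p : ℕ) : Integrable (fun ω ↦ f ω ^ p) μ :=
  integrable_of_abs_le (hf.pow_const p) fun ω ↦ by
    simpa [abs_pow] using pow_le_pow_left₀ (abs_nonneg _) (hc ω) p

lemma integral_sum_eq_zero_of_abs_le [IsFiniteMeasure μ] {ι : Type*} {Z : ι → Ω → ℝ} {C : ℝ}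
    (hmeas : ∀ i, Measurable (Z i)) (hbdd : ∀ i ω, |Z i ω| ≤ C)
    (hmean : ∀ i, ∫ ω, Z i ω ∂μ = 0) (s : Finset ι) : ∫ ω, ∑ i ∈ s, Z i ω ∂μ = 0 := by
  rw [integral_finsetSum s fun i _ ↦ integrable_of_abs_le (hmeas i) (hbdd i)]
  simp [hmean]

lemma abs_sub_integral_le_one_of_mem_Icc [IsProbabilityMeasure μ] {f : Ω → ℝ}
    (hf : ∀ ω, f ω ∈ Set.Icc (0 : ℝ) 1) (ω : Ω) : |f ω - ∫ ω, f ω ∂μ| ≤ 1 := by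
  have h0 : 0 ≤ ∫ ω, f ω ∂μ := integral_nonneg fun ω ↦ (hf ω).1
  have h1 : ∫ ω, f ω ∂μ ≤ 1 := by
    simpa [abs_of_nonneg h0] using norm_integral_le_of_norm_le_const (μ := μ)
      (ae_of_all _ fun ω ↦ (by
        rw [Real.norm_eq_abs, abs_le]
        exact ⟨by linarith [(hf ω).1], (hf ω).2⟩ : ‖f ω‖ ≤ 1))
  rw [abs_le]
  constructor <;> linarith [(hf ω).1, (hf ω).2]

lemma ProbabilityTheory.IndepFun.integral_add_pow {X Y : Ω → ℝ} (hXY : IndepFun X Y μ)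
    {m : ℕ} (hX : ∀ p ≤ m, Integrable (fun ω ↦ X ω ^ p) μ)
    (hY : ∀ p ≤ m, Integrable (fun ω ↦ Y ω ^ p) μ) :
    ∫ ω, (X ω + Y ω) ^ m ∂μ =
      ∑ p ∈ Finset.range (m + 1), (∫ ω, X ω ^ p ∂μ) * (∫ ω, Y ω ^ (m - p) ∂μ) * m.choose p := by
  have hpow (p q : ℕ) : IndepFun (fun ω ↦ X ω ^ p) (fun ω ↦ Y ω ^ q) μ :=
    hXY.comp (measurable_id.pow_const p) (measurable_id.pow_const q)
  simp_rw [add_pow]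
  rw [integral_finsetSum]
  · refine Finset.sum_congr rfl fun p hp ↦ ?_
    rw [integral_mul_const, ← (hpow p (m - p)).integral_mul_eq_mul_integral
      (hX p (by grind)).aestronglyMeasurable (hY _ (by omega)).aestronglyMeasurable]
    rfl
  · intro p hp
    exact ((hpow p (m - p)).integrable_mul (hX p (by grind)) (hY _ (by omega))).mul_const _

end Moments

namespace ProbabilityTheory.iIndepFun

variable {Ω ι : Type*} [MeasurableSpace Ω] {μ : Measure Ω} [IsProbabilityMeasure μ]
  {Z : ι → Ω → ℝ} {C : ℝ}

lemma integral_sum_insert_pow [DecidableEq ι] (hZ : iIndepFun Z μ)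
    (hmeas : ∀ i, Measurable (Z i)) (hbdd : ∀ i ω, |Z i ω| ≤ C) {s : Finset ι} {a : ι}
    (ha : a ∉ s) (m : ℕ) :
    ∫ ω, (∑ i ∈ insert a s, Z i ω) ^ m ∂μ =
      ∑ p ∈ Finset.range (m + 1),
        (∫ ω, (∑ i ∈ s, Z i ω) ^ p ∂μ) * (∫ ω, Z a ω ^ (m - p) ∂μ) * m.choose p := by
  have hS : IndepFun (fun ω ↦ ∑ i ∈ s, Z i ω) (Z a) μ := by
    simpa [Finset.sum_fn] using hZ.indepFun_finsetSum_of_notMem hmeas ha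
  have hSbdd (ω : Ω) : |∑ i ∈ s, Z i ω| ≤ s.card * C := by
    calc |∑ i ∈ s, Z i ω| ≤ ∑ i ∈ s, |Z i ω| := Finset.abs_sum_le_sum_abs _ _
      _ ≤ s.card * C := by simpa using Finset.sum_le_card_nsmul s _ C fun i _ ↦ hbdd i ω
  simp_rw [Finset.sum_insert ha, add_comm (Z a _)]
  exact hS.integral_add_pow
    (fun p _ ↦ integrable_pow_of_abs_le (Finset.measurable_sum s fun i _ ↦ hmeas i) hSbdd p)
    (fun p _ ↦ integrable_pow_of_abs_le (hmeas a) (hbdd a) p)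

variable (hZ : iIndepFun Z μ) (hmeas : ∀ i, Measurable (Z i)) (hbdd : ∀ i ω, |Z i ω| ≤ C)
  (hmean : ∀ i, ∫ ω, Z i ω ∂μ = 0)
include hZ hmeas hbdd hmean

lemma integral_sum_sq (s : Finset ι) :
    ∫ ω, (∑ i ∈ s, Z i ω) ^ 2 ∂μ = ∑ i ∈ s, ∫ ω, Z i ω ^ 2 ∂μ := by
  classical
  induction s using Finset.induction_on with
  | empty => simp
  | insert a s ha ih =>
    rw [hZ.integral_sum_insert_pow hmeas hbdd ha, Finset.sum_insert ha, ← ih]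
    simp [Finset.sum_range_succ, integral_sum_eq_zero_of_abs_le hmeas hbdd hmean, hmean]

lemma integral_sum_pow_four_le (s : Finset ι) :
    ∫ ω, (∑ i ∈ s, Z i ω) ^ 4 ∂μ ≤
      3 * (∫ ω, (∑ i ∈ s, Z i ω) ^ 2 ∂μ) ^ 2 + C ^ 2 * ∫ ω, (∑ i ∈ s, Z i ω) ^ 2 ∂μ := by
  classical
  have hZ4 (i : ι) : ∫ ω, Z i ω ^ 4 ∂μ ≤ C ^ 2 * ∫ ω, Z i ω ^ 2 ∂μ := by
    rw [← integral_const_mul]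
    refine integral_mono (integrable_pow_of_abs_le (hmeas i) (hbdd i) 4)
      ((integrable_pow_of_abs_le (hmeas i) (hbdd i) 2).const_mul _) fun ω ↦ ?_
    have : Z i ω ^ 2 ≤ C ^ 2 := sq_le_sq.mpr ((hbdd i ω).trans (le_abs_self C))
    nlinarith [sq_nonneg (Z i ω)]
  simp_rw [hZ.integral_sum_sq hmeas hbdd hmean]
  induction s using Finset.induction_on with
  | empty => simp
  | insert a s ha ih =>
    rw [hZ.integral_sum_insert_pow hmeas hbdd ha, Finset.sum_insert ha]
    simp [Finset.sum_range_succ, integral_sum_eq_zero_of_abs_le hmeas hbdd hmean, hmean,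
      hZ.integral_sum_sq hmeas hbdd hmean, Nat.choose]
    nlinarith [hZ4 a, sq_nonneg (∫ ω, Z a ω ^ 2 ∂μ)]

end ProbabilityTheory.iIndepFun

section TwoRows

variable {Ω κ ι : Type*} [MeasurableSpace Ω] {μ : Measure Ω} [IsProbabilityMeasure μ]
  [Fintype ι] {u : κ → ι → Ω → ℝ} {m v : ℝ}

lemma integral_sum_sub_sum_moments [DecidableEq κ]
    (hindep : iIndepFun (fun p : κ × ι ↦ u p.1 p.2) μ) (hmeas : ∀ k t, Measurable (u k t))
    (hbdd : ∀ k t ω, |u k t ω - m| ≤ 1) (hmean : ∀ k t, ∫ ω, u k t ω ∂μ = m)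
    (hvar : ∀ k t, ∫ ω, (u k t ω - m) ^ 2 ∂μ = v) {k₀ k₁ : κ} (hk : k₀ ≠ k₁) :
    ∫ ω, (∑ t, u k₀ t ω - ∑ t, u k₁ t ω) ^ 2 ∂μ = 2 * Fintype.card ι * v ∧
    ∫ ω, (∑ t, u k₀ t ω - ∑ t, u k₁ t ω) ^ 4 ∂μ ≤
      3 * (∫ ω, (∑ t, u k₀ t ω - ∑ t, u k₁ t ω) ^ 2 ∂μ) ^ 2 +
        ∫ ω, (∑ t, u k₀ t ω - ∑ t, u k₁ t ω) ^ 2 ∂μ := by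
  set ε : κ → ℝ := fun k ↦ if k = k₀ then 1 else -1
  set Z : κ × ι → Ω → ℝ := fun p ω ↦ ε p.1 * (u p.1 p.2 ω - m)
  have hε (k : κ) : |ε k| = 1 := by unfold ε; split_ifs <;> simp
  have hZindep : iIndepFun Z μ :=
    hindep.comp (fun p x ↦ ε p.1 * (x - m)) fun p ↦ by fun_prop
  have hZmeas (p : κ × ι) : Measurable (Z p) := by fun_prop
  have hZbdd (p : κ × ι) (ω : Ω) : |Z p ω| ≤ 1 := by
    simpa [Z, abs_mul, hε] using hbdd p.1 p.2 ω
  have hu (k : κ) (t : ι) : Integrable (u k t) μ :=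
    integrable_of_abs_le (c := 1 + |m|) (hmeas k t) fun ω ↦ by
      linarith [hbdd k t ω, abs_sub_abs_le_abs_sub (u k t ω) m]
  have hZmean (p : κ × ι) : ∫ ω, Z p ω ∂μ = 0 := by
    simp [Z, integral_const_mul, integral_sub (hu _ _) (integrable_const m), hmean]
  have hZvar (p : κ × ι) : ∫ ω, Z p ω ^ 2 ∂μ = v := by
    simp_rw [Z, mul_pow, ← sq_abs (ε _), hε, one_pow, one_mul, hvar]
  have hsum (ω : Ω) :
      ∑ t, u k₀ t ω - ∑ t, u k₁ t ω = ∑ p ∈ {k₀, k₁} ×ˢ Finset.univ, Z p ω := by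
    simp [Z, ε, Finset.sum_product, Finset.sum_pair hk, hk.symm, Finset.sum_sub_distrib]
  simp_rw [hsum]
  refine ⟨?_, by simpa using hZindep.integral_sum_pow_four_le hZmeas hZbdd hZmean _⟩
  simp [hZindep.integral_sum_sq hZmeas hZbdd hZmean, hZvar, Finset.card_pair hk]

lemma sqrt_le_integral_abs_sum_sub_sum [DecidableEq κ]
    (hindep : iIndepFun (fun p : κ × ι ↦ u p.1 p.2) μ) (hmeas : ∀ k t, Measurable (u k t))
    (hbdd : ∀ k t ω, |u k t ω - m| ≤ 1) (hmean : ∀ k t, ∫ ω, u k t ω ∂μ = m)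
    (hvar : ∀ k t, ∫ ω, (u k t ω - m) ^ 2 ∂μ = v) {k₀ k₁ : κ} (hk : k₀ ≠ k₁)
    (hv : 1 ≤ 2 * Fintype.card ι * v) :
    3 / 16 * √(2 * Fintype.card ι * v) ≤ ∫ ω, |∑ t, u k₀ t ω - ∑ t, u k₁ t ω| ∂μ := by
  obtain ⟨h2, h4⟩ := integral_sum_sub_sum_moments hindep hmeas hbdd hmean hvar hk
  have hYmeas : Measurable fun ω ↦ ∑ t, u k₀ t ω - ∑ t, u k₁ t ω := by fun_prop
  have hYbdd (ω : Ω) : |∑ t, u k₀ t ω - ∑ t, u k₁ t ω| ≤ Fintype.card ι * 2 := by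
    rw [← Finset.sum_sub_distrib]
    refine (Finset.abs_sum_le_sum_abs _ _).trans ?_
    simpa using Finset.sum_le_card_nsmul Finset.univ _ 2 fun t _ ↦
      (abs_sub_le _ m _).trans (by rw [abs_sub_comm m]; linarith [hbdd k₀ t ω, hbdd k₁ t ω])
  have h := sqrt_integral_sq_le_of_integral_pow_four_le (integrable_of_abs_le hYmeas hYbdd)
    (integrable_pow_of_abs_le hYmeas hYbdd 2) (integrable_pow_of_abs_le hYmeas hYbdd 4)
    (K := 4) (by norm_num) (by rw [h2] at h4 ⊢; nlinarith)
  rw [h2, show (4 : ℝ) = 2 ^ 2 by norm_num, Real.sqrt_sq zero_le_two] at h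
  linarith

end TwoRows

lemma integral_add_add_abs_sub_div_two_le_integral_sup' {Ω ι : Type*} [MeasurableSpace Ω]
    {μ : Measure Ω} {s : Finset ι} (hs : s.Nonempty) {X : ι → Ω → ℝ}
    (hX : ∀ k, Integrable (X k) μ) {i j : ι} (hi : i ∈ s) (hj : j ∈ s) :
    (∫ ω, X i ω ∂μ + ∫ ω, X j ω ∂μ + ∫ ω, |X i ω - X j ω| ∂μ) / 2 ≤
      ∫ ω, s.sup' hs (fun k ↦ X k ω) ∂μ := by
  have hmax : Integrable (fun ω ↦ s.sup' hs (fun k ↦ X k ω)) μ := by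
    simp_rw [← Finset.sup'_apply]
    exact Finset.sup'_induction hs X (p := (Integrable · μ)) (fun _ hf _ hg ↦ hf.sup hg)
      fun k _ ↦ hX k
  have hij : Integrable (fun ω ↦ X i ω - X j ω) μ := (hX i).sub (hX j)
  have hsum : Integrable (fun ω ↦ X i ω + X j ω) μ := (hX i).add (hX j)
  rw [← integral_add (hX i) (hX j), ← integral_add hsum hij.abs, ← integral_div]
  refine integral_mono ((hsum.add hij.abs).div_const 2) hmax fun ω ↦ ?_
  have := Finset.le_sup' (fun k ↦ X k ω) hi
  have := Finset.le_sup' (fun k ↦ X k ω) hj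
  rcases abs_cases (X i ω - X j ω) with ⟨h, _⟩ | ⟨h, _⟩ <;> simp only [h] <;> linarith

theorem expected_max_of_iid_sums_lower_bound :
    ∀ σmin : ℝ, 0 < σmin → ∃ N : ℕ, ∀ n' : ℕ, N ≤ n' → ∀ g : ℕ, ∀ hg : 2 ≤ g,
    ∀ (Ω : Type) [MeasureSpace Ω] [IsProbabilityMeasure (ℙ : Measure Ω)]
      (u : Fin g → Fin n' → Ω → ℝ) (μ v : ℝ),
      (∀ k t, Measurable (u k t)) →
      (∀ k t ω, u k t ω ∈ Set.Icc (0 : ℝ) 1) →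
      iIndepFun (fun p : Fin g × Fin n' => u p.1 p.2) →
      (∀ k t k' t', IdentDistrib (u k t) (u k' t') ℙ ℙ) →
      (∀ k t, ∫ ω, u k t ω = μ) →
      (∀ k t, ∫ ω, (u k t ω - μ) ^ 2 = v) →
      σmin ^ 2 ≤ v →
      (∀ k t, ∫ ω, |u k t ω - μ| ^ 3 ≤ (1 : ℝ)) →
      μ * n' + σmin * Real.sqrt n' / 50
        ≤ ∫ ω, Finset.univ.sup'
            (Finset.univ_nonempty_iff.mpr (Fin.pos_iff_nonempty.mp (by omega)))
            (fun k : Fin g => ∑ t, u k t ω) := by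
  intro σmin hσ
  refine ⟨⌈(σmin ^ 2)⁻¹⌉₊, fun n' hn' g hg Ω _ _ u μ v hmeas hu hindep _ hmean hvar hv _ ↦ ?_⟩
  have hσn : 1 ≤ σmin ^ 2 * n' := by
    rw [← inv_mul_le_iff₀ (by positivity), mul_one]
    exact (Nat.le_ceil _).trans (by exact_mod_cast hn')
  have hint (k t) : Integrable (u k t) := integrable_of_abs_le (c := 1) (hmeas k t) fun ω ↦
    abs_le.mpr ⟨by linarith [(hu k t ω).1], (hu k t ω).2⟩
  have hcent (k t ω) : |u k t ω - μ| ≤ 1 := by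
    simpa [hmean] using abs_sub_integral_le_one_of_mem_Icc (μ := ℙ) (hu k t) ω
  have hrowmean (k) : ∫ ω, ∑ t, u k t ω = μ * n' := by
    simp [integral_finsetSum _ fun t _ ↦ hint k t, hmean, mul_comm]
  obtain ⟨k₀, k₁, hk⟩ : ∃ k₀ k₁ : Fin g, k₀ ≠ k₁ :=
    ⟨⟨0, by omega⟩, ⟨1, by omega⟩, by simp [Fin.ext_iff]⟩
  have hE1 := sqrt_le_integral_abs_sum_sub_sum hindep hmeas hcent hmean hvar hk
    (by rw [Fintype.card_fin]; nlinarith)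
  have hmax := integral_add_add_abs_sub_div_two_le_integral_sup' (μ := ℙ)
    ⟨k₀, Finset.mem_univ k₀⟩ (X := fun k ω ↦ ∑ t, u k t ω)
    (fun k ↦ integrable_finsetSum _ fun t _ ↦ hint k t) (Finset.mem_univ k₀) (Finset.mem_univ k₁)
  have hsqrt : σmin * √n' ≤ √(2 * Fintype.card (Fin n') * v) := by
    rw [← Real.sqrt_sq hσ.le, ← Real.sqrt_mul (sq_nonneg _), Fintype.card_fin]
    exact Real.sqrt_le_sqrt (by nlinarith)
  rw [hrowmean, hrowmean] at hmax
  have : 0 ≤ σmin * √n' := by positivity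
  linarith
end
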